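/- Let H be a real Hilbert space, L a bounded linear operator on H, and {V_n} an asymptotically-invariant exhausting sequence of subspaces with respect to L. If K is a compact bounded linear operator on H, then {V_n} is also an asymptotically-invariant exhausting sequence with respect to L + K; in particular, ‖(L+K) π_{V_n} − π_{V_n} (L+K)‖ → 0 in operator norm. -/

import Mathlib

open scoped InnerProductSpace

/-- The orthogonal projection of a Hilbert space onto (the closure of) a subspace, viewed as a
continuous linear operator `H →L[ℝ] H`. For a closed (e.g. finite-dimensional) subspace this is
the usual orthogonal projection onto it. -/
noncomputable def orthProj {H : Type*} [NormedAddCommGroup H] [InnerProductSpace ℝ H]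
    [CompleteSpace H] (V : Submodule ℝ H) : H →L[ℝ] H :=
  V.topologicalClosure.subtypeL.comp (V.topologicalClosure.orthogonalProjectionOnto)

/-- A sequence `{V n}` of finite-dimensional subspaces of `H` is an *asymptotically-invariant
exhausting sequence* with respect to a bounded operator `L` if it is increasing, the
commutators `[L, π_{V n}]` tend to `0` in operator norm, and `π_{V n} → 1` pointwise. -/
def IsAsymptInvExhaustingSeq {H : Type*} [NormedAddCommGroup H] [InnerProductSpace ℝ H]
    [CompleteSpace H] (L : H →L[ℝ] H) (V : ℕ → Submodule ℝ H) : Prop :=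
  (∀ n, FiniteDimensional ℝ (V n)) ∧ Monotone V ∧
  Filter.Tendsto (fun n => ‖L * orthProj (V n) - orthProj (V n) * L‖) Filter.atTop (nhds 0) ∧
  (∀ x : H, Filter.Tendsto (fun n => orthProj (V n) x) Filter.atTop (nhds x))

open Filter Topology Metric
open scoped NNReal

/-! With `Q n = 1 - π_{V n}` the commutator is `[K, π_{V n}] = Q n K - K Q n`. The operators `Q n`
are contractions tending to `0` pointwise, hence uniformly on the totally bounded set `K(B)`, so
`‖Q n K‖ → 0`. For the other term the C*-identity gives `‖K Q n‖² = ‖Q n K*K Q n‖ ≤ ‖Q n (K*K)‖`,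
which tends to `0` by the same argument applied to the compact operator `K*K`, so Schauder's
theorem for `K*` is not needed. The commutator is additive in the operator, so the claim for
`L + K` follows. -/

namespace ContinuousLinearMap

section Normed

variable {𝕜 E F G ι : Type*} [RCLike 𝕜] [NormedAddCommGroup E] [NormedSpace 𝕜 E]
  [NormedAddCommGroup F] [NormedSpace 𝕜 F] [NormedAddCommGroup G] [NormedSpace 𝕜 G]
  {l : Filter ι} {T : ι → F →L[𝕜] G} {C : ℝ≥0}

theorem tendstoUniformlyOn_of_norm_le_of_tendsto (hbdd : ∀ i, ‖T i‖ ≤ C)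
    (hT : ∀ y, Tendsto (fun i => T i y) l (𝓝 0)) {S : Set F} (hS : TotallyBounded S) :
    TendstoUniformlyOn (fun i => ⇑(T i)) 0 l S := by
  refine Metric.tendstoUniformlyOn_iff.2 fun ε hε => ?_
  have hδ : 0 < ε / 2 / (C + 1) := by positivity
  obtain ⟨t, ht, hSt⟩ := Metric.totallyBounded_iff.1 hS _ hδ
  have hnet : ∀ᶠ i in l, ∀ z ∈ t, ‖T i z‖ < ε / 2 :=
    ht.eventually_all.2 fun z _ =>
      (hT z).norm.eventually (gt_mem_nhds (by simpa using half_pos hε))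
  filter_upwards [hnet] with i hi y hy
  obtain ⟨z, hz, hyz⟩ := Set.mem_iUnion₂.1 (hSt hy)
  rw [Pi.zero_apply, dist_zero_left]
  calc ‖T i y‖ ≤ ‖T i (y - z)‖ + ‖T i z‖ := by
        simpa only [map_sub, sub_add_cancel] using norm_add_le (T i (y - z)) (T i z)
    _ ≤ C * (ε / 2 / (C + 1)) + ‖T i z‖ := by
        gcongr
        refine (T i).le_of_opNorm_le (hbdd i) _ |>.trans ?_
        gcongr
        exact (dist_eq_norm y z ▸ mem_ball.1 hyz).le
    _ < ε / 2 + ε / 2 := by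
        refine add_lt_add_of_le_of_lt ?_ (hi z hz)
        calc (C : ℝ) * (ε / 2 / (C + 1)) ≤ (C + 1) * (ε / 2 / (C + 1)) := by gcongr; simp
          _ = ε / 2 := mul_div_cancel₀ _ (by positivity)
    _ = ε := add_halves ε

theorem tendsto_norm_comp_of_totallyBounded_image (hbdd : ∀ i, ‖T i‖ ≤ C)
    (hT : ∀ y, Tendsto (fun i => T i y) l (𝓝 0)) {K : E →L[𝕜] F}
    (hK : TotallyBounded (K '' closedBall 0 1)) :
    Tendsto (fun i => ‖T i ∘L K‖) l (𝓝 0) := by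
  have hunif :=
    Metric.tendstoUniformlyOn_iff.1 (tendstoUniformlyOn_of_norm_le_of_tendsto hbdd hT hK)
  refine Metric.tendsto_nhds.2 fun ε hε => ?_
  filter_upwards [hunif (ε / 2) (half_pos hε)] with i hi
  rw [dist_zero_right, norm_norm]
  refine (opNorm_le_of_unit_norm (half_pos hε).le fun x hx => ?_).trans_lt (half_lt_self hε)
  simpa using (hi (K x) ⟨x, by simp [hx], rfl⟩).le

end Normed

section InnerProduct

variable {𝕜 E F ι : Type*} [RCLike 𝕜] [NormedAddCommGroup E] [InnerProductSpace 𝕜 E]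
  [CompleteSpace E] [NormedAddCommGroup F] [InnerProductSpace 𝕜 F] [CompleteSpace F]

theorem norm_comp_sq_le_of_isSelfAdjoint (K : E →L[𝕜] F) {Q : E →L[𝕜] E}
    (hQ : IsSelfAdjoint Q) :
    ‖K ∘L Q‖ ^ 2 ≤ ‖Q ∘L (adjoint K ∘L K)‖ * ‖Q‖ := by
  have hadj : adjoint (K ∘L Q) ∘L (K ∘L Q) = (Q ∘L (adjoint K ∘L K)) ∘L Q := by
    rw [adjoint_comp, hQ.adjoint_eq]; rfl
  calc ‖K ∘L Q‖ ^ 2 = ‖adjoint (K ∘L Q) ∘L (K ∘L Q)‖ := by rw [norm_adjoint_comp_self, sq]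
    _ ≤ ‖Q ∘L (adjoint K ∘L K)‖ * ‖Q‖ := hadj ▸ opNorm_comp_le _ _

theorem tendsto_norm_comp_of_isSelfAdjoint {l : Filter ι} {Q : ι → E →L[𝕜] E}
    (hQ : ∀ i, IsSelfAdjoint (Q i)) (hQ1 : ∀ i, ‖Q i‖ ≤ 1)
    (hQx : ∀ x, Tendsto (fun i => Q i x) l (𝓝 0)) {K : E →L[𝕜] F}
    (hK : TotallyBounded (K '' closedBall 0 1)) :
    Tendsto (fun i => ‖K ∘L Q i‖) l (𝓝 0) := by
  have hKK : TotallyBounded ((adjoint K ∘L K) '' closedBall 0 1) := by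
    rw [coe_comp, Set.image_comp]
    exact hK.image (adjoint K).uniformContinuous
  have hQKK : Tendsto (fun i => ‖Q i ∘L (adjoint K ∘L K)‖) l (𝓝 0) :=
    tendsto_norm_comp_of_totallyBounded_image (C := 1) (by exact_mod_cast hQ1) hQx hKK
  refine squeeze_zero (fun _ => norm_nonneg _) (fun i => ?_) (by simpa using hQKK.sqrt)
  refine Real.le_sqrt_of_sq_le ((norm_comp_sq_le_of_isSelfAdjoint K (hQ i)).trans ?_)
  exact mul_le_of_le_one_right (norm_nonneg _) (hQ1 i)

end InnerProduct

end ContinuousLinearMap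

section OrthProj

variable {H ι : Type*} [NormedAddCommGroup H] [InnerProductSpace ℝ H] [CompleteSpace H]

theorem one_sub_orthProj (V : Submodule ℝ H) :
    1 - orthProj V = V.topologicalClosureᗮ.starProjection :=
  (Submodule.starProjection_orthogonal' _).symm

theorem tendsto_norm_commutator_orthProj {l : Filter ι} {V : ι → Submodule ℝ H}
    (hV : ∀ x, Tendsto (fun i => orthProj (V i) x) l (𝓝 x)) {K : H →L[ℝ] H}
    (hK : TotallyBounded (K '' closedBall 0 1)) :
    Tendsto (fun i => ‖K * orthProj (V i) - orthProj (V i) * K‖) l (𝓝 0) := by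
  set Q := fun i => 1 - orthProj (V i)
  have hQ : ∀ i, IsSelfAdjoint (Q i) := fun i => by
    simpa only [Q, one_sub_orthProj] using isSelfAdjoint_starProjection _
  have hQ1 : ∀ i, ‖Q i‖ ≤ 1 := fun i => by
    simpa only [Q, one_sub_orthProj] using Submodule.starProjection_norm_le _
  have hQx : ∀ x, Tendsto (fun i => Q i x) l (𝓝 0) := fun x => by
    simpa [Q] using (hV x).const_sub x
  have hQK : Tendsto (fun i => ‖Q i ∘L K‖) l (𝓝 0) :=
    ContinuousLinearMap.tendsto_norm_comp_of_totallyBounded_image (C := 1)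
      (by exact_mod_cast hQ1) hQx hK
  have hKQ : Tendsto (fun i => ‖K ∘L Q i‖) l (𝓝 0) :=
    ContinuousLinearMap.tendsto_norm_comp_of_isSelfAdjoint hQ hQ1 hQx hK
  refine squeeze_zero (fun _ => norm_nonneg _) (fun i => ?_) (by simpa using hQK.add hKQ)
  have hcomm : K * orthProj (V i) - orthProj (V i) * K = Q i * K - K * Q i := by
    simp only [Q]; noncomm_ring
  exact hcomm ▸ norm_sub_le _ _

end OrthProj

/-- An asymptotically-invariant exhausting sequence with respect to `L` is
also asymptotically-invariant exhausting with respect to `L + K` for any compact bounded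
linear operator `K`; in particular `‖(L+K) π_{V n} − π_{V n} (L+K)‖ → 0`. -/
theorem isAsymptInvExhaustingSeq_add_compact
    {H : Type*} [NormedAddCommGroup H] [InnerProductSpace ℝ H] [CompleteSpace H]
    (L K : H →L[ℝ] H) (V : ℕ → Submodule ℝ H)
    (hV : IsAsymptInvExhaustingSeq L V)
    (hK : TotallyBounded (K '' Metric.closedBall (0:H) 1)) :
    IsAsymptInvExhaustingSeq (L + K) V ∧
    Filter.Tendsto (fun n => ‖(L + K) * orthProj (V n) - orthProj (V n) * (L + K)‖)
      Filter.atTop (nhds 0) := by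
  obtain ⟨hfd, hmono, hL, hpt⟩ := hV
  have hLK :
      Tendsto (fun n => ‖(L + K) * orthProj (V n) - orthProj (V n) * (L + K)‖) atTop (𝓝 0) := by
    refine squeeze_zero (fun _ => norm_nonneg _) (fun n => ?_)
      (by simpa using hL.add (tendsto_norm_commutator_orthProj hpt hK))
    have hcomm : (L + K) * orthProj (V n) - orthProj (V n) * (L + K) =
        (L * orthProj (V n) - orthProj (V n) * L) +
          (K * orthProj (V n) - orthProj (V n) * K) := by
      noncomm_ring
    exact hcomm ▸ norm_add_le _ _
  exact ⟨⟨hfd, hmono, hLK, hpt⟩, hLK⟩
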